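/- Let D be a Gauss diagram of a virtual knot (a single circle) with n chords that admits an (integer-valued) Alexander numbering, so that the first elementary ideal ℰ₁(D) ⊆ ℤ[t^{±1}] is principal. If g ∈ ℤ[t^{±1}] is any generator of ℰ₁(D) (an Alexander polynomial Δ_D(t) of D), then the integer g(−1), the image of g under the evaluation t ↦ −1, is odd. -/

import Mathlib

noncomputable section

open scoped Classical

def FoxPair (R : Type) [CommRing R] : Type := Rˣ × R

namespace FoxPair

variable {R : Type} [CommRing R]

instance : Mul (FoxPair R) := ⟨fun a b => (a.1 * b.1, a.2 + (a.1 : R) * b.2)⟩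
instance : One (FoxPair R) := ⟨(1, 0)⟩
instance : Inv (FoxPair R) := ⟨fun a => (a.1⁻¹, -(((a.1⁻¹ : Rˣ) : R) * a.2))⟩

@[simp] lemma mul_def (a b : FoxPair R) :
    a * b = (a.1 * b.1, a.2 + (a.1 : R) * b.2) := rfl
@[simp] lemma one_def : (1 : FoxPair R) = ((1 : Rˣ), (0 : R)) := rfl
@[simp] lemma inv_def (a : FoxPair R) :
    a⁻¹ = (a.1⁻¹, -(((a.1⁻¹ : Rˣ) : R) * a.2)) := rfl

instance : Group (FoxPair R) where
  mul_assoc a b c := by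
    show ((a.1 * b.1) * c.1, (a.2 + (a.1 : R) * b.2) + ((a.1 * b.1 : Rˣ) : R) * c.2) =
      (a.1 * (b.1 * c.1), a.2 + (a.1 : R) * (b.2 + (b.1 : R) * c.2))
    refine Prod.ext ?_ ?_ <;> simp [Units.val_mul, mul_assoc, mul_add, add_assoc]
  one_mul a := by
    show ((1 : Rˣ) * a.1, (0 : R) + ((1 : Rˣ) : R) * a.2) = a
    refine Prod.ext ?_ ?_ <;> simp
  mul_one a := by
    show (a.1 * 1, a.2 + (a.1 : R) * 0) = a
    refine Prod.ext ?_ ?_ <;> simp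
  inv_mul_cancel a := by
    show (a.1⁻¹ * a.1, -(((a.1⁻¹ : Rˣ) : R) * a.2) + ((a.1⁻¹ : Rˣ) : R) * a.2) =
      ((1 : Rˣ), (0 : R))
    refine Prod.ext ?_ ?_ <;> simp

end FoxPair

def foxHom {α : Type} [DecidableEq α] {R : Type} [CommRing R] (φ : α → Rˣ) (x : α) :
    FreeGroup α →* FoxPair R :=
  FreeGroup.lift fun y => ((φ y, if y = x then (1 : R) else 0) : FoxPair R)

/-- The Fox derivative `∂w/∂x`, evaluated under the evaluation `φ` of the generators. -/
def fox {α : Type} [DecidableEq α] {R : Type} [CommRing R] (φ : α → Rˣ) (x : α)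
    (w : FreeGroup α) : R :=
  (foxHom φ x w).2

/-- A Gauss diagram: a finite set of chords, each with an arrowhead (`Sum.inl c`,
the under-crossing passage) and an arrowtail (`Sum.inr c`, the over-crossing passage)
and a sign (`true` = +1, `false` = −1); the endpoints are arranged on a disjoint
union of oriented circles, recorded by the successor permutation `next`. -/
structure GaussDiagram where
  Chord : Type
  [chordFintype : Fintype Chord]
  [chordDecEq : DecidableEq Chord]
  next : Equiv.Perm (Chord ⊕ Chord)
  sign : Chord → Bool

attribute [instance] GaussDiagram.chordFintype GaussDiagram.chordDecEq

namespace GaussDiagram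

variable (D : GaussDiagram)

abbrev Endpoint : Type := D.Chord ⊕ D.Chord
abbrev Arc : Type := D.Endpoint
def sgn (c : D.Chord) : ℤ := if D.sign c then 1 else -1
def ui (c : D.Chord) : D.Arc := Sum.inl c
def uo (c : D.Chord) : D.Arc := D.next (Sum.inl c)
def oi (c : D.Chord) : D.Arc := Sum.inr c
def oo (c : D.Chord) : D.Arc := D.next (Sum.inr c)

def IsAlexanderNumbering (p : ℕ) (lam : D.Arc → ZMod p) : Prop :=
  ∀ c : D.Chord,
    if D.sign c then
      lam (D.oi c) = lam (D.uo c) ∧ lam (D.ui c) = lam (D.oo c) ∧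
        lam (D.ui c) = lam (D.oi c) - 1
    else
      lam (D.ui c) = lam (D.oo c) ∧ lam (D.oi c) = lam (D.uo c) ∧
        lam (D.oi c) = lam (D.ui c) - 1

/-- The diagram consists of a single circle. -/
def SingleCircle : Prop := ∀ x y : D.Endpoint, ∃ k : ℕ, (⇑D.next)^[k] x = y

def tailRel : D.Endpoint → D.Endpoint → Prop :=
  fun x y => ∃ c : D.Chord, x = Sum.inr c ∧ y = D.next (Sum.inr c)

/-- Long arcs: maximal arcs between consecutive arrowheads. -/
def LongArc : Type := Quotient (Relation.EqvGen.setoid D.tailRel)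

instance : Fintype D.LongArc :=
  Fintype.ofSurjective (Quotient.mk _) fun q => Quotient.exists_rep q

def la (x : D.Endpoint) : D.LongArc := Quotient.mk _ x

/-- Wirtinger relator of a chord: `c = b^ε a b^{−ε}`. -/
def knotRel (c : D.Chord) : FreeGroup D.LongArc :=
  FreeGroup.of (D.la (D.next (Sum.inl c))) *
    (FreeGroup.of (D.la (Sum.inr c)) ^ D.sgn c * FreeGroup.of (D.la (Sum.inl c)) *
        FreeGroup.of (D.la (Sum.inr c)) ^ (-D.sgn c))⁻¹

/-- The Alexander matrix of the Wirtinger presentation of the knot group: Fox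
derivatives of the Wirtinger relators with respect to the long-arc generators,
evaluated by sending every generator to `t`. -/
def knotMatrix : Matrix D.Chord D.LongArc (LaurentPolynomial ℤ) :=
  fun c j =>
    fox (fun _ : D.LongArc => (LaurentPolynomial.isUnit_T (R := ℤ) 1).unit) j
      (D.knotRel c)

/-- The set of `(n−1) × (n−1)` minors of the Alexander matrix, `n` the number of
chords. -/
def minorSet : Set (LaurentPolynomial ℤ) :=
  {m | ∃ (f : Fin (Fintype.card D.Chord - 1) → D.Chord)
        (g : Fin (Fintype.card D.Chord - 1) → D.LongArc),
      Function.Injective f ∧ Function.Injective g ∧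
        m = (D.knotMatrix.submatrix f g).det}

/-- The first elementary ideal `ℰ₁(D) ⊆ ℤ[t^{±1}]`. -/
def elemIdeal₁ : Ideal (LaurentPolynomial ℤ) := Ideal.span D.minorSet

end GaussDiagram

/-! Under a ring homomorphism `ψ` with `ψ t = 1` the Fox derivatives collapse to exponent sums,
so the row of the Alexander matrix belonging to a chord becomes `e_out − e_in` for the long arcs
leaving and entering its arrowhead: the over-crossing arc drops out. On a single circle the chords
are cyclically ordered by their arrowheads, each long arc ending at exactly one of them, so
deleting one row and one column leaves a unitriangular matrix. Hence some minor maps to `1` and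
every generator of `ℰ₁` maps to a unit; for `ψ` the evaluation `t ↦ −1` followed by reduction
mod 2 this says that `Δ(−1)` is odd. -/
namespace FreeGroup

variable {α : Type} [DecidableEq α]

def exponentSum (x : α) : FreeGroup α →* Multiplicative ℤ :=
  lift fun y => Multiplicative.ofAdd (if y = x then 1 else 0)

@[simp] lemma exponentSum_of (x y : α) :
    exponentSum x (of y) = Multiplicative.ofAdd (if y = x then 1 else 0) :=
  lift_apply_of

end FreeGroup

section Fox

variable {α : Type} [DecidableEq α] {R : Type} [CommRing R] (φ : α → Rˣ) (x : α)

lemma foxHom_fst (w : FreeGroup α) : (foxHom φ x w).1 = FreeGroup.lift φ w := by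
  induction w with
  | C1 => rfl
  | of y =>
    rw [FreeGroup.lift_apply_of]
    exact congrArg Prod.fst (FreeGroup.lift_apply_of (β := FoxPair R))
  | inv_of y ih => simp only [map_inv, ← ih]; rfl
  | mul u v hu hv => simp only [map_mul, ← hu, ← hv]; rfl

@[simp] lemma fox_one : fox φ x 1 = 0 := rfl

@[simp] lemma fox_of (y : α) : fox φ x (FreeGroup.of y) = if y = x then 1 else 0 :=
  congrArg Prod.snd (FreeGroup.lift_apply_of (β := FoxPair R))

lemma fox_mul (u w : FreeGroup α) :
    fox φ x (u * w) = fox φ x u + (FreeGroup.lift φ u : R) * fox φ x w := by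
  simp only [fox, map_mul, ← foxHom_fst φ x]; rfl

lemma fox_inv (u : FreeGroup α) :
    fox φ x u⁻¹ = -((FreeGroup.lift φ u⁻¹ : Rˣ) : R) * fox φ x u := by
  simp only [fox, map_inv, ← foxHom_fst φ x]; rw [FoxPair.inv_def]; ring

end Fox

theorem map_lift_eq_one {α : Type} {R S : Type} [CommRing R] [CommRing S] {φ : α → Rˣ}
    {ψ : R →+* S} (hψ : ∀ y, ψ (φ y) = 1) (w : FreeGroup α) :
    ψ (FreeGroup.lift φ w : R) = 1 := by
  have : (Units.map (ψ : R →* S)).comp (FreeGroup.lift φ) = 1 :=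
    FreeGroup.ext_hom _ _ fun y => Units.ext (by simp [hψ])
  simpa using congrArg (fun h => ((h w : Sˣ) : S)) this

theorem map_fox_eq_exponentSum {α : Type} [DecidableEq α] {R S : Type} [CommRing R]
    [CommRing S] {φ : α → Rˣ} {ψ : R →+* S} (hψ : ∀ y, ψ (φ y) = 1) (x : α)
    (w : FreeGroup α) : ψ (fox φ x w) = (FreeGroup.exponentSum x w).toAdd := by
  induction w with
  | C1 => simp
  | of y => simp [apply_ite ψ]
  | inv_of y ih =>
    rw [fox_inv, map_mul, map_neg, map_lift_eq_one hψ, ih, map_inv, toAdd_inv]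
    push_cast; ring
  | mul u v hu hv => simp [fox_mul, map_lift_eq_one hψ, hu, hv]

theorem Function.minimalPeriod_eq_card_of_forall_exists_iterate_eq {α : Type} [Fintype α]
    {f : α → α} {x : α} (hx : x ∈ periodicPts f) (h : ∀ y, ∃ m, f^[m] x = y) :
    minimalPeriod f x = Fintype.card α := by
  have hsurj : Surjective fun k : Fin (minimalPeriod f x) => f^[k] x := fun y => by
    obtain ⟨m, rfl⟩ := h y
    exact ⟨⟨m % _, Nat.mod_lt _ (minimalPeriod_pos_of_mem_periodicPts hx)⟩,
      iterate_mod_minimalPeriod_eq⟩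
  refine minimalPeriod_le_card.antisymm ?_
  simpa using Fintype.card_le_of_surjective _ hsurj

theorem Matrix.det_one_sub_subdiagonal {S : Type} [CommRing S] (m : ℕ) :
    (1 - Matrix.of fun i j : Fin m => if (i : ℕ) = j + 1 then (1 : S) else 0).det = 1 := by
  rw [Matrix.det_of_isLowerTriangular]
  · simp
  · intro i j hij
    have : (i : ℕ) < j := hij
    simp [Fin.ne_of_lt this, show (i : ℕ) ≠ j + 1 by omega]

namespace GaussDiagram

variable {D : GaussDiagram}

lemma exponentSum_knotRel (c : D.Chord) (j : D.LongArc) :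
    (FreeGroup.exponentSum j (D.knotRel c)).toAdd =
      (if D.la (D.uo c) = j then 1 else 0) - (if D.la (D.ui c) = j then 1 else 0) := by
  simp [knotRel, uo, ui, sub_eq_add_neg]
  -- only the `Decidable` instances of the `if`s differ
  rfl

lemma map_knotMatrix {S : Type} [CommRing S] {ψ : LaurentPolynomial ℤ →+* S}
    (hψ : ψ (LaurentPolynomial.T 1) = 1) (c : D.Chord) (j : D.LongArc) :
    ψ (D.knotMatrix c j) =
      (if D.la (D.uo c) = j then 1 else 0) - (if D.la (D.ui c) = j then 1 else 0) := by
  rw [knotMatrix, map_fox_eq_exponentSum (fun _ => by simpa using hψ), exponentSum_knotRel]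
  push_cast
  rfl

def EveryCircleHasArrowhead (D : GaussDiagram) : Prop :=
  ∀ x : D.Endpoint, ∃ k : ℕ, ∃ c : D.Chord, (⇑D.next)^[k] x = Sum.inl c

lemma SingleCircle.everyCircleHasArrowhead (hknot : D.SingleCircle)
    (c₀ : D.Chord) : D.EveryCircleHasArrowhead :=
  fun x => ⟨_, c₀, (hknot x (Sum.inl c₀)).choose_spec⟩

section NextHead

variable (H : D.EveryCircleHasArrowhead)

def headDist (x : D.Endpoint) : ℕ := Nat.find (H x)

def nextHead (x : D.Endpoint) : D.Chord := (Nat.find_spec (H x)).choose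

lemma iterate_headDist (x : D.Endpoint) :
    (⇑D.next)^[headDist H x] x = Sum.inl (nextHead H x) :=
  (Nat.find_spec (H x)).choose_spec

lemma headDist_inl (c : D.Chord) : headDist H (Sum.inl c) = 0 :=
  (Nat.find_eq_zero (H _)).2 ⟨c, rfl⟩

lemma nextHead_inl (c : D.Chord) : nextHead H (Sum.inl c) = c := by
  simpa [headDist_inl] using (iterate_headDist H (Sum.inl c)).symm

lemma headDist_inr (c : D.Chord) :
    headDist H (Sum.inr c) = headDist H (D.next (Sum.inr c)) + 1 :=
  Nat.find_comp_succ _ (H _) (by simp)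

lemma nextHead_inr (c : D.Chord) : nextHead H (Sum.inr c) = nextHead H (D.next (Sum.inr c)) := by
  have h := iterate_headDist H (Sum.inr c)
  rw [headDist_inr, Function.iterate_succ_apply, iterate_headDist] at h
  exact (Sum.inl.inj h).symm

lemma la_inr (c : D.Chord) : D.la (Sum.inr c) = D.la (D.next (Sum.inr c)) :=
  Quotient.sound (Relation.EqvGen.rel _ _ ⟨c, rfl, rfl⟩)

lemma la_eq_la_nextHead : ∀ x : D.Endpoint, D.la x = D.la (Sum.inl (nextHead H x))
  | Sum.inl c => by rw [nextHead_inl]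
  | Sum.inr c => by
    rw [la_inr, nextHead_inr]
    exact la_eq_la_nextHead (D.next (Sum.inr c))
termination_by x => headDist H x
decreasing_by rw [headDist_inr]; omega

lemma nextHead_eq_of_la_eq {x y : D.Endpoint} (h : D.la x = D.la y) :
    nextHead H x = nextHead H y := by
  obtain hxy := Quotient.exact h
  clear h
  induction hxy with
  | rel x y hxy =>
    obtain ⟨c, rfl, rfl⟩ := hxy
    exact nextHead_inr H c
  | refl => rfl
  | symm _ _ _ ih => exact ih.symm
  | trans _ _ _ _ _ ih₁ ih₂ => exact ih₁.trans ih₂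

def nextChord (c : D.Chord) : D.Chord := nextHead H (D.uo c)

lemma la_uo (c : D.Chord) : D.la (D.uo c) = D.la (Sum.inl (nextChord H c)) :=
  la_eq_la_nextHead H _

lemma exists_iterate_nextChord_eq {j : ℕ} {c d : D.Chord}
    (h : (⇑D.next)^[j] (Sum.inl c) = Sum.inl d) : ∃ m, (nextChord H)^[m] c = d := by
  induction j using Nat.strong_induction_on generalizing c with
  | _ j ih =>
    cases j with
    | zero => exact ⟨0, Sum.inl.inj h⟩
    | succ j =>
      rw [Function.iterate_succ_apply] at h
      have hle : headDist H (D.uo c) ≤ j := Nat.find_le ⟨d, h⟩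
      have h' : (⇑D.next)^[j - headDist H (D.uo c)] (Sum.inl (nextChord H c)) = Sum.inl d := by
        rw [nextChord, ← iterate_headDist, ← Function.iterate_add_apply, Nat.sub_add_cancel hle]
        exact h
      obtain ⟨m, hm⟩ := ih _ (by omega) h'
      exact ⟨m + 1, hm⟩

end NextHead

lemma EveryCircleHasArrowhead.la_inl_injective (H : D.EveryCircleHasArrowhead) :
    Function.Injective fun c : D.Chord => D.la (Sum.inl c) :=
  fun a b h => by simpa [nextHead_inl] using nextHead_eq_of_la_eq H h

lemma SingleCircle.injOn_iterate_nextChord (hknot : D.SingleCircle)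
    (H : D.EveryCircleHasArrowhead) (c₀ : D.Chord) :
    Set.InjOn (fun k => (nextChord H)^[k] c₀) (Set.Iio (Fintype.card D.Chord)) := by
  obtain ⟨m, hm⟩ := exists_iterate_nextChord_eq H
    (hknot (Sum.inl (nextChord H c₀)) (Sum.inl c₀)).choose_spec
  have hper : c₀ ∈ Function.periodicPts (nextChord H) :=
    Function.mk_mem_periodicPts m.succ_pos hm
  have hcard := Function.minimalPeriod_eq_card_of_forall_exists_iterate_eq hper fun d =>
    exists_iterate_nextChord_eq H (hknot (Sum.inl c₀) (Sum.inl d)).choose_spec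
  exact hcard ▸ Function.iterate_injOn_Iio_minimalPeriod

theorem exists_minor_map_eq_one (hknot : D.SingleCircle) {S : Type} [CommRing S]
    {ψ : LaurentPolynomial ℤ →+* S} (hψ : ψ (LaurentPolynomial.T 1) = 1) :
    ∃ m ∈ D.minorSet, ψ m = 1 := by
  rcases isEmpty_or_nonempty D.Chord with hempty | hne
  · have : IsEmpty (Fin (Fintype.card D.Chord - 1)) := by
      rw [Fintype.card_eq_zero, Nat.zero_sub]; infer_instance
    exact ⟨_, ⟨isEmptyElim, isEmptyElim, isEmptyElim, isEmptyElim, rfl⟩, by simp⟩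
  obtain ⟨c₀⟩ := hne
  have H := hknot.everyCircleHasArrowhead c₀
  have hinj := hknot.injOn_iterate_nextChord H c₀
  let row : Fin (Fintype.card D.Chord - 1) → D.Chord := fun i => (nextChord H)^[i] c₀
  let col : Fin (Fintype.card D.Chord - 1) → D.LongArc :=
    fun j => D.la (Sum.inl ((nextChord H)^[j + 1] c₀))
  have iterate_eq_iff {a b : ℕ} (ha : a < Fintype.card D.Chord) (hb : b < Fintype.card D.Chord) :
      (nextChord H)^[a] c₀ = (nextChord H)^[b] c₀ ↔ a = b := hinj.eq_iff ha hb
  have hrow : Function.Injective row := fun i j h =>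
    Fin.ext ((iterate_eq_iff (by omega) (by omega)).1 h)
  have hcol : Function.Injective col := fun i j h =>
    Fin.ext (by simpa using (iterate_eq_iff (by omega) (by omega)).1 (H.la_inl_injective h))
  refine ⟨_, ⟨row, col, hrow, hcol, rfl⟩, ?_⟩
  -- row `i` has `+1` at its outgoing arc (column `i`) and `−1` at its incoming arc (column `i − 1`)
  have hentries : ψ.mapMatrix (D.knotMatrix.submatrix row col) =
      1 - Matrix.of fun i j : Fin _ => if (i : ℕ) = j + 1 then (1 : S) else 0 := by
    ext i j
    simp only [RingHom.mapMatrix_apply, Matrix.map_apply, Matrix.submatrix_apply,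
      map_knotMatrix hψ, la_uo H, ← Function.iterate_succ_apply' (nextChord H), ui, row, col,
      H.la_inl_injective.eq_iff, Nat.succ_eq_add_one]
    have hdiag := iterate_eq_iff (a := i + 1) (b := j + 1) (by omega) (by omega)
    have hsub := iterate_eq_iff (a := i) (b := j + 1) (by omega) (by omega)
    simp only [hdiag, hsub, add_left_inj]
    simp [Matrix.one_apply, Fin.ext_iff]
  rw [RingHom.map_det, hentries, Matrix.det_one_sub_subdiagonal]

theorem isUnit_map_of_elemIdeal₁_eq_span (hknot : D.SingleCircle)
    {g : LaurentPolynomial ℤ} (hg : D.elemIdeal₁ = Ideal.span {g}) {S : Type} [CommRing S]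
    {ψ : LaurentPolynomial ℤ →+* S} (hψ : ψ (LaurentPolynomial.T 1) = 1) : IsUnit (ψ g) := by
  obtain ⟨m, hm, hψm⟩ := exists_minor_map_eq_one hknot hψ
  have hgm : g ∣ m := Ideal.mem_span_singleton.1 (hg ▸ Ideal.subset_span hm)
  exact isUnit_of_dvd_one (hψm ▸ map_dvd ψ hgm)

end GaussDiagram

theorem alexanderPolynomial_det_odd_general (D : GaussDiagram) (hknot : D.SingleCircle)
    (g : LaurentPolynomial ℤ) (hg : D.elemIdeal₁ = Ideal.span {g})
    (f : LaurentPolynomial ℤ →+* ℤ) (hf : f (LaurentPolynomial.T 1) = -1) :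
    Odd (f g) := by
  have hψ : (Int.castRingHom (ZMod 2)).comp f (LaurentPolynomial.T 1) = 1 := by simp [hf]
  have hunit := GaussDiagram.isUnit_map_of_elemIdeal₁_eq_span hknot hg hψ
  exact Int.not_even_iff_odd.1 fun heven => hunit.ne_zero (ZMod.intCast_eq_zero_iff_even.2 heven)

/-- The Alexander polynomial of an almost classical knot, i.e. any
generator of its (principal) first elementary ideal, evaluates at `t = −1` to an odd
integer. -/
theorem alexanderPolynomial_det_odd (D : GaussDiagram) (hknot : D.SingleCircle)
    (lam : D.Arc → ℤ) (h : D.IsAlexanderNumbering 0 lam)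
    (g : LaurentPolynomial ℤ) (hg : D.elemIdeal₁ = Ideal.span {g})
    (f : LaurentPolynomial ℤ →+* ℤ) (hf : f (LaurentPolynomial.T 1) = -1) :
    Odd (f g) :=
  alexanderPolynomial_det_odd_general D hknot g hg f hf
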